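/- The function I_{2b} = x h_{xy}/h_y is invariant under the transformation (x,y,u) ↦ (x, y+C, F(u)) with h ↦ h/F'(u)² + ((2F'''F' − 3F''²)/(8F'⁴))x, and also under (x,h) ↦ (−x,−h) and y ↦ −y. -/

import Mathlib

noncomputable section

/-- Partial derivative on `ℝ³` with coordinates `(x,y,u)`. -/
def pd3 (f : (Fin 3 → ℝ) → ℝ) (i : Fin 3) (p : Fin 3 → ℝ) : ℝ :=
  fderiv ℝ f p (Pi.single i 1)

/-- `I_{2b} = x h_{xy}/h_y` evaluated on a function `h = h(x,y,u)` at a point. -/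
def I2b (h : (Fin 3 → ℝ) → ℝ) (q : Fin 3 → ℝ) : ℝ :=
  q 0 * pd3 (fun r => pd3 h 0 r) 1 q / pd3 h 1 q

/-- Base transformation `(x,y,u) ↦ (x, y + C, F(u))`. -/
def T (F : ℝ → ℝ) (C : ℝ) (q : Fin 3 → ℝ) : Fin 3 → ℝ := ![q 0, q 1 + C, F (q 2)]

lemma pd3_line (f : (Fin 3 → ℝ) → ℝ) {p : Fin 3 → ℝ} (hf : DifferentiableAt ℝ f p)
    (i : Fin 3) :
    pd3 f i p = deriv (fun t : ℝ => f (p + t • (Pi.single i 1 : Fin 3 → ℝ))) 0 := by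
  rw [pd3, ← hf.lineDeriv_eq_fderiv]; rfl

lemma line_diff (f : (Fin 3 → ℝ) → ℝ) (hf : Differentiable ℝ f) (p v : Fin 3 → ℝ) :
    DifferentiableAt ℝ (fun t : ℝ => f (p + t • v)) 0 :=
  (hf _).comp _ ((differentiableAt_const p).add (differentiableAt_id.smul_const v))

lemma deriv_line_neg (f : (Fin 3 → ℝ) → ℝ) (q v : Fin 3 → ℝ) :
    deriv (fun t : ℝ => f (q + t • (-v))) 0 = -deriv (fun t : ℝ => f (q + t • v)) 0 := by
  have e : (fun t : ℝ => f (q + t • (-v))) = fun t : ℝ => (fun s : ℝ => f (q + s • v)) (-t) := by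
    funext t; simp [smul_neg, neg_smul]
  rw [e, deriv_comp_neg (f := fun s : ℝ => f (q + s • v))]; simp

lemma pd3_diff (f : (Fin 3 → ℝ) → ℝ) (hf : ContDiff ℝ (⊤ : ℕ∞) f) (i : Fin 3) :
    Differentiable ℝ (pd3 f i) :=
  ((hf.fderiv_right (m := 1) (by exact WithTop.coe_le_coe.mpr le_top)).clm_apply contDiff_const).differentiable one_ne_zero

/-- `I_{2b} = x h_{xy}/h_y` is invariant under the transformation `(x,y,u) ↦ (x,y+C,F(u))`
with `h ↦ h/F'² + ((2F'''F' − 3F''²)/(8F'⁴)) x`, and also under `(x,h) ↦ (−x,−h)` and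
`y ↦ −y`. -/
theorem I2b_invariant (F : ℝ → ℝ) (C : ℝ) (hF : ContDiff ℝ (⊤ : ℕ∞) F)
    (hF' : ∀ u, deriv F u ≠ 0)
    (h h₁ h₂ h₃ : (Fin 3 → ℝ) → ℝ)
    (hh : ContDiff ℝ (⊤ : ℕ∞) h) (hh₁ : ContDiff ℝ (⊤ : ℕ∞) h₁) (hh₂ : ContDiff ℝ (⊤ : ℕ∞) h₂)
    (hh₃ : ContDiff ℝ (⊤ : ℕ∞) h₃)
    (hy : ∀ q : Fin 3 → ℝ, pd3 h 1 q ≠ 0)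
    (hrel₁ : ∀ q : Fin 3 → ℝ,
      h₁ (T F C q) =
        h q / (deriv F (q 2)) ^ 2 +
          ((2 * deriv (deriv (deriv F)) (q 2) * deriv F (q 2)
              - 3 * (deriv (deriv F) (q 2)) ^ 2) / (8 * (deriv F (q 2)) ^ 4)) * q 0)
    (hrel₂ : ∀ q : Fin 3 → ℝ, h₂ ![-q 0, q 1, q 2] = -h q)
    (hrel₃ : ∀ q : Fin 3 → ℝ, h₃ ![q 0, -q 1, q 2] = h q) :
    ∀ q : Fin 3 → ℝ,
      I2b h₁ (T F C q) = I2b h q ∧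
        I2b h₂ ![-q 0, q 1, q 2] = I2b h q ∧
          I2b h₃ ![q 0, -q 1, q 2] = I2b h q := by
  have hd : Differentiable ℝ h := hh.differentiable (by simp)
  have hd₁ : Differentiable ℝ h₁ := hh₁.differentiable (by simp)
  have hd₂ : Differentiable ℝ h₂ := hh₂.differentiable (by simp)
  have hd₃ : Differentiable ℝ h₃ := hh₃.differentiable (by simp)
  have hpd : Differentiable ℝ (pd3 h 0) := pd3_diff h hh 0
  have hpd₁ : Differentiable ℝ (pd3 h₁ 0) := pd3_diff h₁ hh₁ 0
  have hpd₂ : Differentiable ℝ (pd3 h₂ 0) := pd3_diff h₂ hh₂ 0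
  have hpd₃ : Differentiable ℝ (pd3 h₃ 0) := pd3_diff h₃ hh₃ 0
  set dd : ℝ → ℝ := fun u =>
    (2 * deriv (deriv (deriv F)) u * deriv F u - 3 * (deriv (deriv F) u) ^ 2)
      / (8 * (deriv F u) ^ 4) with hdd
  -- coordinate line identities
  have hT0 : ∀ (r : Fin 3 → ℝ) (t : ℝ),
      T F C r + t • (Pi.single 0 1 : Fin 3 → ℝ) = T F C (r + t • (Pi.single 0 1 : Fin 3 → ℝ)) := by
    intro r t; funext i; fin_cases i <;> simp [T, Pi.single_apply] <;> ring
  have hT1 : ∀ (r : Fin 3 → ℝ) (t : ℝ),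
      T F C r + t • (Pi.single 1 1 : Fin 3 → ℝ) = T F C (r + t • (Pi.single 1 1 : Fin 3 → ℝ)) := by
    intro r t; funext i; fin_cases i <;> simp [T, Pi.single_apply] <;> ring
  have hc20 : ∀ (r : Fin 3 → ℝ) (t : ℝ), (r + t • (Pi.single 0 1 : Fin 3 → ℝ)) 2 = r 2 := by
    intro r t; simp [Pi.single_apply]
  have hc00 : ∀ (r : Fin 3 → ℝ) (t : ℝ), (r + t • (Pi.single 0 1 : Fin 3 → ℝ)) 0 = r 0 + t := by
    intro r t; simp [Pi.single_apply]
  have hc21 : ∀ (r : Fin 3 → ℝ) (t : ℝ), (r + t • (Pi.single 1 1 : Fin 3 → ℝ)) 2 = r 2 := by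
    intro r t; simp [Pi.single_apply]
  have hc01 : ∀ (r : Fin 3 → ℝ) (t : ℝ), (r + t • (Pi.single 1 1 : Fin 3 → ℝ)) 0 = r 0 := by
    intro r t; simp [Pi.single_apply]
  -- Part 1 : transformation T
  have A1 : ∀ r : Fin 3 → ℝ,
      pd3 h₁ 0 (T F C r) = pd3 h 0 r / (deriv F (r 2)) ^ 2 + dd (r 2) := by
    intro r
    rw [pd3_line h₁ (hd₁ _) 0]
    have e : (fun t : ℝ => h₁ (T F C r + t • (Pi.single 0 1 : Fin 3 → ℝ)))
        = fun t : ℝ => h (r + t • (Pi.single 0 1 : Fin 3 → ℝ)) / (deriv F (r 2)) ^ 2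
            + dd (r 2) * (r 0 + t) := by
      funext t
      rw [hT0, hrel₁, hc20, hc00]
    rw [e, deriv_fun_add ((line_diff h hd r _).div_const _) (by fun_prop),
      deriv_div_const, deriv_const_mul _ (by fun_prop), ← pd3_line h (hd _) 0]
    have h1 : deriv (fun t : ℝ => r 0 + t) 0 = 1 := ((hasDerivAt_id (0:ℝ)).const_add (r 0)).deriv
    rw [h1]; ring
  have A2 : pd3 h₁ 1 ∘ (T F C) = fun r => pd3 h 1 r / (deriv F (r 2)) ^ 2 := by
    funext r
    show pd3 h₁ 1 (T F C r) = _
    rw [pd3_line h₁ (hd₁ _) 1]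
    have e : (fun t : ℝ => h₁ (T F C r + t • (Pi.single 1 1 : Fin 3 → ℝ)))
        = fun t : ℝ => h (r + t • (Pi.single 1 1 : Fin 3 → ℝ)) / (deriv F (r 2)) ^ 2
            + dd (r 2) * r 0 := by
      funext t
      rw [hT1, hrel₁, hc21, hc01]
    rw [e, deriv_fun_add ((line_diff h hd r _).div_const _) (by fun_prop),
      deriv_div_const, ← pd3_line h (hd _) 1]
    simp
  intro q
  have cne : ((deriv F (q 2)) ^ 2 : ℝ) ≠ 0 := pow_ne_zero _ (hF' _)
  have A3 : pd3 (pd3 h₁ 0) 1 (T F C q) = pd3 (pd3 h 0) 1 q / (deriv F (q 2)) ^ 2 := by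
    rw [pd3_line (pd3 h₁ 0) (hpd₁ _) 1]
    have e : (fun t : ℝ => pd3 h₁ 0 (T F C q + t • (Pi.single 1 1 : Fin 3 → ℝ)))
        = fun t : ℝ => pd3 h 0 (q + t • (Pi.single 1 1 : Fin 3 → ℝ)) / (deriv F (q 2)) ^ 2
            + dd (q 2) := by
      funext t
      rw [hT1, A1, hc21]
    rw [e, deriv_fun_add ((line_diff _ hpd q _).div_const _) (by fun_prop),
      deriv_div_const, ← pd3_line (pd3 h 0) (hpd _) 1]
    simp
  have part1 : I2b h₁ (T F C q) = I2b h q := by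
    have hA2 : pd3 h₁ 1 (T F C q) = pd3 h 1 q / (deriv F (q 2)) ^ 2 := congrFun A2 q
    show T F C q 0 * pd3 (pd3 h₁ 0) 1 (T F C q) / pd3 h₁ 1 (T F C q)
        = q 0 * pd3 (pd3 h 0) 1 q / pd3 h 1 q
    rw [show T F C q 0 = q 0 from rfl, A3, hA2]
    field_simp [hF' (q 2), hy q]
  -- Part 2 : (x,h) ↦ (-x,-h)
  have B1 : ∀ r : Fin 3 → ℝ, pd3 h₂ 0 ![-r 0, r 1, r 2] = pd3 h 0 r := by
    intro r
    rw [pd3_line h₂ (hd₂ _) 0]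
    have e : (fun t : ℝ => h₂ ((![-r 0, r 1, r 2] : Fin 3 → ℝ) + t • (Pi.single 0 1 : Fin 3 → ℝ)))
        = fun t : ℝ => -h (r + t • (-(Pi.single 0 1 : Fin 3 → ℝ))) := by
      funext t
      rw [show (![-r 0, r 1, r 2] : Fin 3 → ℝ) + t • (Pi.single 0 1 : Fin 3 → ℝ)
          = ![-(r + t • (-(Pi.single 0 1 : Fin 3 → ℝ))) 0,
              (r + t • (-(Pi.single 0 1 : Fin 3 → ℝ))) 1,
              (r + t • (-(Pi.single 0 1 : Fin 3 → ℝ))) 2] from by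
            funext i; fin_cases i <;> simp [Pi.single_apply] <;> ring, hrel₂]
    rw [e, deriv.fun_neg, deriv_line_neg, ← pd3_line h (hd _) 0, neg_neg]
  have B2 : pd3 h₂ 1 ![-q 0, q 1, q 2] = -pd3 h 1 q := by
    rw [pd3_line h₂ (hd₂ _) 1]
    have e : (fun t : ℝ => h₂ ((![-q 0, q 1, q 2] : Fin 3 → ℝ) + t • (Pi.single 1 1 : Fin 3 → ℝ)))
        = fun t : ℝ => -h (q + t • (Pi.single 1 1 : Fin 3 → ℝ)) := by
      funext t
      rw [show (![-q 0, q 1, q 2] : Fin 3 → ℝ) + t • (Pi.single 1 1 : Fin 3 → ℝ)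
          = ![-(q + t • (Pi.single 1 1 : Fin 3 → ℝ)) 0,
              (q + t • (Pi.single 1 1 : Fin 3 → ℝ)) 1,
              (q + t • (Pi.single 1 1 : Fin 3 → ℝ)) 2] from by
            funext i; fin_cases i <;> simp [Pi.single_apply], hrel₂]
    rw [e, deriv.fun_neg, ← pd3_line h (hd _) 1]
  have B3 : pd3 (pd3 h₂ 0) 1 ![-q 0, q 1, q 2] = pd3 (pd3 h 0) 1 q := by
    rw [pd3_line (pd3 h₂ 0) (hpd₂ _) 1]
    have e : (fun t : ℝ => pd3 h₂ 0 ((![-q 0, q 1, q 2] : Fin 3 → ℝ) + t • (Pi.single 1 1 : Fin 3 → ℝ)))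
        = fun t : ℝ => pd3 h 0 (q + t • (Pi.single 1 1 : Fin 3 → ℝ)) := by
      funext t
      rw [show (![-q 0, q 1, q 2] : Fin 3 → ℝ) + t • (Pi.single 1 1 : Fin 3 → ℝ)
          = ![-(q + t • (Pi.single 1 1 : Fin 3 → ℝ)) 0,
              (q + t • (Pi.single 1 1 : Fin 3 → ℝ)) 1,
              (q + t • (Pi.single 1 1 : Fin 3 → ℝ)) 2] from by
            funext i; fin_cases i <;> simp [Pi.single_apply], B1]
    rw [e, ← pd3_line (pd3 h 0) (hpd _) 1]
  have part2 : I2b h₂ ![-q 0, q 1, q 2] = I2b h q := by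
    show (![-q 0, q 1, q 2] : Fin 3 → ℝ) 0 * pd3 (pd3 h₂ 0) 1 ![-q 0, q 1, q 2]
          / pd3 h₂ 1 ![-q 0, q 1, q 2]
        = q 0 * pd3 (pd3 h 0) 1 q / pd3 h 1 q
    rw [show (![-q 0, q 1, q 2] : Fin 3 → ℝ) 0 = -q 0 from rfl, B3, B2, neg_mul, neg_div_neg_eq]
  -- Part 3 : y ↦ -y
  have C1 : ∀ r : Fin 3 → ℝ, pd3 h₃ 0 ![r 0, -r 1, r 2] = pd3 h 0 r := by
    intro r
    rw [pd3_line h₃ (hd₃ _) 0]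
    have e : (fun t : ℝ => h₃ ((![r 0, -r 1, r 2] : Fin 3 → ℝ) + t • (Pi.single 0 1 : Fin 3 → ℝ)))
        = fun t : ℝ => h (r + t • (Pi.single 0 1 : Fin 3 → ℝ)) := by
      funext t
      rw [show (![r 0, -r 1, r 2] : Fin 3 → ℝ) + t • (Pi.single 0 1 : Fin 3 → ℝ)
          = ![(r + t • (Pi.single 0 1 : Fin 3 → ℝ)) 0,
              -(r + t • (Pi.single 0 1 : Fin 3 → ℝ)) 1,
              (r + t • (Pi.single 0 1 : Fin 3 → ℝ)) 2] from by
            funext i; fin_cases i <;> simp [Pi.single_apply], hrel₃]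
    rw [e, ← pd3_line h (hd _) 0]
  have C2 : pd3 h₃ 1 ![q 0, -q 1, q 2] = -pd3 h 1 q := by
    rw [pd3_line h₃ (hd₃ _) 1]
    have e : (fun t : ℝ => h₃ ((![q 0, -q 1, q 2] : Fin 3 → ℝ) + t • (Pi.single 1 1 : Fin 3 → ℝ)))
        = fun t : ℝ => h (q + t • (-(Pi.single 1 1 : Fin 3 → ℝ))) := by
      funext t
      rw [show (![q 0, -q 1, q 2] : Fin 3 → ℝ) + t • (Pi.single 1 1 : Fin 3 → ℝ)
          = ![(q + t • (-(Pi.single 1 1 : Fin 3 → ℝ))) 0,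
              -(q + t • (-(Pi.single 1 1 : Fin 3 → ℝ))) 1,
              (q + t • (-(Pi.single 1 1 : Fin 3 → ℝ))) 2] from by
            funext i; fin_cases i <;> simp [Pi.single_apply] <;> ring, hrel₃]
    rw [e, deriv_line_neg, ← pd3_line h (hd _) 1]
  have C3 : pd3 (pd3 h₃ 0) 1 ![q 0, -q 1, q 2] = -pd3 (pd3 h 0) 1 q := by
    rw [pd3_line (pd3 h₃ 0) (hpd₃ _) 1]
    have e : (fun t : ℝ => pd3 h₃ 0 ((![q 0, -q 1, q 2] : Fin 3 → ℝ) + t • (Pi.single 1 1 : Fin 3 → ℝ)))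
        = fun t : ℝ => pd3 h 0 (q + t • (-(Pi.single 1 1 : Fin 3 → ℝ))) := by
      funext t
      rw [show (![q 0, -q 1, q 2] : Fin 3 → ℝ) + t • (Pi.single 1 1 : Fin 3 → ℝ)
          = ![(q + t • (-(Pi.single 1 1 : Fin 3 → ℝ))) 0,
              -(q + t • (-(Pi.single 1 1 : Fin 3 → ℝ))) 1,
              (q + t • (-(Pi.single 1 1 : Fin 3 → ℝ))) 2] from by
            funext i; fin_cases i <;> simp [Pi.single_apply] <;> ring, C1]
    rw [e, deriv_line_neg, ← pd3_line (pd3 h 0) (hpd _) 1]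
  have part3 : I2b h₃ ![q 0, -q 1, q 2] = I2b h q := by
    show (![q 0, -q 1, q 2] : Fin 3 → ℝ) 0 * pd3 (pd3 h₃ 0) 1 ![q 0, -q 1, q 2]
          / pd3 h₃ 1 ![q 0, -q 1, q 2]
        = q 0 * pd3 (pd3 h 0) 1 q / pd3 h 1 q
    rw [show (![q 0, -q 1, q 2] : Fin 3 → ℝ) 0 = q 0 from rfl, C3, C2, mul_neg, neg_div_neg_eq]
  exact ⟨part1, part2, part3⟩

end
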